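/- Let N ≥ 2, 2N/(N+2) < p < N, ℓ ≥ 2, β_ii > 0 and β_ij < 0 for i ≠ j, and let Ω be any domain in ℝ^N. Then for every u = (u_1,…,u_ℓ) ∈ M(Ω) one has J(u) = (1/N) Σ_{i=1}^ℓ ‖u_i‖_p^p ≥ Σ_{i=1}^ℓ m_i, where m_i := (1/N) β_ii^{−(N−p)/p} S_p^{N/p}. In particular μ(Ω) ≥ Σ_{i=1}^ℓ m_i. -/

import Mathlib

open MeasureTheory Filter Metric
open scoped Real ENNReal Topology RealInnerProductSpace

noncomputable section

/-- `ℝ^N`. -/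
abbrev RN (N : ℕ) := EuclideanSpace ℝ (Fin N)

/-- The critical Sobolev exponent `p* = Np/(N-p)`. -/
def pStar (N : ℕ) (p : ℝ) : ℝ := N * p / (N - p)

/-- Test functions: smooth, compactly supported, with support contained in `Ω`. -/
def IsTest (N : ℕ) (Ω : Set (RN N)) (φ : RN N → ℝ) : Prop :=
  ContDiff ℝ (⊤ : ℕ∞) φ ∧ HasCompactSupport φ ∧ tsupport φ ⊆ Ω

/-- `V` is the weak (distributional) gradient of `u`. -/
def IsWeakGrad (N : ℕ) (u : RN N → ℝ) (V : RN N → RN N) : Prop :=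
  ∀ φ : RN N → ℝ, ContDiff ℝ (⊤ : ℕ∞) φ → HasCompactSupport φ →
    ∀ i : Fin N, (∫ x, u x * fderiv ℝ φ x (EuclideanSpace.single i 1))
      = - ∫ x, V x i * φ x

/-- An element of `D^{1,p}(ℝ^N)`: a function in `L^{p*}` together with its weak
gradient, which lies in `L^p`. -/
structure D1p (N : ℕ) (p : ℝ) where
  toFun : RN N → ℝ
  grad : RN N → RN N
  memLp_star : MemLp toFun (ENNReal.ofReal (pStar N p)) volume
  grad_memLp : MemLp grad (ENNReal.ofReal p) volume
  isWeakGrad : IsWeakGrad N toFun grad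

/-- `‖u‖_p ^ p`, the `p`-th power of the `D^{1,p}` norm. -/
def gradPow (N : ℕ) (p : ℝ) (u : D1p N p) : ℝ := ∫ x, ‖u.grad x‖ ^ p

/-- Membership in `D_0^{1,p}(Ω)`: `u` is approximated, in the `D^{1,p}` norm, by
smooth functions with compact support contained in `Ω`. -/
def InD0 (N : ℕ) (p : ℝ) (Ω : Set (RN N)) (u : D1p N p) : Prop :=
  ∃ φ : ℕ → RN N → ℝ, (∀ k, IsTest N Ω (φ k)) ∧
    Tendsto (fun k => ∫ x, ‖gradient (φ k) x - u.grad x‖ ^ p) atTop (𝓝 0)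

/-- The best Sobolev constant `S_p` for the embedding `D^{1,p}(ℝ^N) ↪ L^{p*}(ℝ^N)`. -/
def SobolevS (N : ℕ) (p : ℝ) : ℝ :=
  sInf { r | ∃ u : D1p N p, ¬ (u.toFun =ᵐ[volume] (0 : RN N → ℝ)) ∧
    r = (∫ x, ‖u.grad x‖ ^ p) / (∫ x, |u.toFun x| ^ pStar N p) ^ (p / pStar N p) }

/-- `∫ |u|^{p*/2} |v|^{p*/2}`. -/
def pairInt (N : ℕ) (p : ℝ) (u v : D1p N p) : ℝ :=
  ∫ x, |u.toFun x| ^ (pStar N p / 2) * |v.toFun x| ^ (pStar N p / 2)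

/-- The energy functional `J` of the system with coupling matrix `β`. -/
def Jfun (N : ℕ) (p : ℝ) {ℓ : ℕ} (β : Fin ℓ → Fin ℓ → ℝ) (u : Fin ℓ → D1p N p) : ℝ :=
  (1 / p) * ∑ i, gradPow N p (u i)
    - (1 / pStar N p) * ∑ i, ∑ j, β i j * pairInt N p (u j) (u i)

/-- The Nehari-type set `M(Ω)`: all components are nontrivial and `∂_i J(u) u_i = 0`. -/
def InNehariM (N : ℕ) (p : ℝ) {ℓ : ℕ} (Ω : Set (RN N)) (β : Fin ℓ → Fin ℓ → ℝ)
    (u : Fin ℓ → D1p N p) : Prop :=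
  (∀ i, InD0 N p Ω (u i)) ∧
  ∀ i, ¬ ((u i).toFun =ᵐ[volume] (0 : RN N → ℝ)) ∧
    gradPow N p (u i) = ∑ j, β i j * pairInt N p (u j) (u i)

/-- `μ(Ω) = inf_{M(Ω)} J`. -/
def muOmega (N : ℕ) (p : ℝ) {ℓ : ℕ} (Ω : Set (RN N)) (β : Fin ℓ → Fin ℓ → ℝ) : ℝ :=
  sInf (Jfun N p β '' { u | InNehariM N p Ω β u })

/-- `u` is a weak solution, with components in `D_0^{1,p}(Ω)`, of the system
`-Δ_p u_i = Σ_j β_ij |u_j|^{p*/2} |u_i|^{p*/2-2} u_i` in `Ω`. -/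
def IsSystemSol (N : ℕ) (p : ℝ) {ℓ : ℕ} (Ω : Set (RN N)) (β : Fin ℓ → Fin ℓ → ℝ)
    (u : Fin ℓ → D1p N p) : Prop :=
  (∀ i, InD0 N p Ω (u i)) ∧
  ∀ i, ∀ φ : RN N → ℝ, IsTest N Ω φ →
    (∫ x, ‖(u i).grad x‖ ^ (p - 2) * (inner ℝ ((u i).grad x) (gradient φ x) : ℝ))
      = ∫ x, (∑ j, β i j * |(u j).toFun x| ^ (pStar N p / 2) *
          |(u i).toFun x| ^ (pStar N p / 2 - 2) * (u i).toFun x) * φ x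

/-- `w` is a weak solution of the critical equation `-Δ_p w = |w|^{p*-2} w` in `ℝ^N`. -/
def IsEqSol (N : ℕ) (p : ℝ) (w : D1p N p) : Prop :=
  ∀ φ : RN N → ℝ, ContDiff ℝ (⊤ : ℕ∞) φ → HasCompactSupport φ →
    (∫ x, ‖w.grad x‖ ^ (p - 2) * (inner ℝ (w.grad x) (gradient φ x) : ℝ))
      = ∫ x, |w.toFun x| ^ (pStar N p - 2) * w.toFun x * φ x

/-- A function changes sign: both `{u > 0}` and `{u < 0}` have positive measure. -/
def SignChanging (N : ℕ) (u : RN N → ℝ) : Prop :=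
  0 < volume {x | 0 < u x} ∧ 0 < volume {x | u x < 0}

/-- A function is nonradial: it is not a.e. equal to any radial function. -/
def Nonradial (N : ℕ) (u : RN N → ℝ) : Prop :=
  ¬ ∃ f : ℝ → ℝ, ∀ᵐ x, u x = f ‖x‖

/-- A domain: a nonempty connected open set. -/
def IsDomainSet (N : ℕ) (Ω : Set (RN N)) : Prop := IsOpen Ω ∧ IsConnected Ω

/-- `m_i = (1/N) β_ii^{-(N-p)/p} S_p^{N/p}`. -/
def mI (N : ℕ) (p b : ℝ) : ℝ :=
  (1 / (N : ℝ)) * b ^ (-(((N : ℝ) - p) / p)) * SobolevS N p ^ ((N : ℝ) / p)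

/-! ### The symmetries -/

/-- The action of a unit complex number `g` on `ℝ^N ≡ ℂ² × ℝ^{N-4}`:
`g(z₁, z₂, y) = (g z₁, ḡ z₂, y)`. -/
def cAct (N : ℕ) (g : ℂ) : RN N → RN N :=
  if h4 : 4 ≤ N then fun x =>
    let w1 : ℂ := g * ⟨x ⟨0, by omega⟩, x ⟨1, by omega⟩⟩
    let w2 : ℂ := (starRingEnd ℂ) g * ⟨x ⟨2, by omega⟩, x ⟨3, by omega⟩⟩
    WithLp.toLp 2 (fun i : Fin N => if (i : ℕ) = 0 then w1.re else if (i : ℕ) = 1 then w1.im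
      else if (i : ℕ) = 2 then w2.re else if (i : ℕ) = 3 then w2.im else x i)
  else fun x => x

/-- `τ(z₁, z₂) = (-z̄₂, z̄₁)` on `ℂ²`. -/
def tauC (z : ℂ × ℂ) : ℂ × ℂ := (-((starRingEnd ℂ) z.2), (starRingEnd ℂ) z.1)

/-- `(cos θ) z + (sin θ) τz` on `ℂ²`. -/
def rotC (θ : ℝ) (z : ℂ × ℂ) : ℂ × ℂ :=
  ((Real.cos θ : ℂ) * z.1 + (Real.sin θ : ℂ) * (tauC z).1,
   (Real.cos θ : ℂ) * z.2 + (Real.sin θ : ℂ) * (tauC z).2)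

/-- The map `(z, y) ↦ ((cos θ) z + (sin θ) τz, y)` on `ℝ^N ≡ ℂ² × ℝ^{N-4}`. -/
def rotMap (N : ℕ) (θ : ℝ) : RN N → RN N :=
  if h4 : 4 ≤ N then fun x =>
    let w := rotC θ (⟨x ⟨0, by omega⟩, x ⟨1, by omega⟩⟩, ⟨x ⟨2, by omega⟩, x ⟨3, by omega⟩⟩)
    WithLp.toLp 2 (fun i : Fin N => if (i : ℕ) = 0 then w.1.re else if (i : ℕ) = 1 then w.1.im
      else if (i : ℕ) = 2 then w.2.re else if (i : ℕ) = 3 then w.2.im else x i)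
  else fun x => x

/-- `ρ_ℓ = rotation by π/ℓ`. -/
def rhoMap (N ℓ : ℕ) : RN N → RN N := rotMap N (Real.pi / ℓ)

/-- `G`-invariance of a function on `ℝ^N`. -/
def GInv (N : ℕ) (u : RN N → ℝ) : Prop :=
  ∀ g : ℂ, ‖g‖ = 1 → ∀ x, u (cAct N g x) = u x

/-- The pinwheel symmetry conditions `(P₁)` and `(P₂)`. -/
def Pinwheel (N : ℕ) (p : ℝ) {ℓ : ℕ} [NeZero ℓ] (u : Fin ℓ → D1p N p) : Prop :=
  (∀ j, GInv N (u j).toFun) ∧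
  ∀ j : Fin ℓ, ∀ x, (u (j + 1)).toFun x = (u j).toFun (rhoMap N ℓ x)

/-- The coupling matrix of the symmetric system: `β_ii = 1`, `β_ij = β` for `i ≠ j`. -/
def symbeta (ℓ : ℕ) (β : ℝ) : Fin ℓ → Fin ℓ → ℝ := fun i j => if i = j then 1 else β

/-- Membership in `𝒟(Ω)`: components in `D_0^{1,p}(Ω)` with pinwheel symmetries. -/
def InDD (N : ℕ) (p : ℝ) {ℓ : ℕ} [NeZero ℓ] (Ω : Set (RN N)) (u : Fin ℓ → D1p N p) : Prop :=
  (∀ i, InD0 N p Ω (u i)) ∧ Pinwheel N p u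

/-- Membership in the Nehari set `𝒩(Ω)`: `u ∈ 𝒟(Ω)`, `u ≠ 0` and `J'(u)u = 0`. -/
def InNehariPinwheel (N : ℕ) (p : ℝ) {ℓ : ℕ} [NeZero ℓ] (Ω : Set (RN N)) (β : ℝ)
    (u : Fin ℓ → D1p N p) : Prop :=
  InDD N p Ω u ∧ (¬ ∀ i, (u i).toFun =ᵐ[volume] (0 : RN N → ℝ)) ∧
  ∑ i, gradPow N p (u i) = ∑ i, ∑ j, symbeta ℓ β i j * pairInt N p (u j) (u i)

/-- `c(Ω) = inf_{𝒩(Ω)} J`. -/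
def cOmega (N : ℕ) (p : ℝ) (ℓ : ℕ) [NeZero ℓ] (Ω : Set (RN N)) (β : ℝ) : ℝ :=
  sInf (Jfun N p (symbeta ℓ β) '' { u | InNehariPinwheel N p Ω β u })

/-- A domain invariant under the subgroup of `O(N)` generated by `G ∪ {ρ_ℓ}`
(equivalently, invariant under each of the generators, since `G` is a group and
`ρ_ℓ` has finite order). -/
def InvariantDomain (N ℓ : ℕ) (Ω : Set (RN N)) : Prop :=
  IsOpen Ω ∧ IsConnected Ω ∧
  (∀ g : ℂ, ‖g‖ = 1 → ∀ x ∈ Ω, cAct N g x ∈ Ω) ∧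
  (∀ x ∈ Ω, rhoMap N ℓ x ∈ Ω)

/-- The set `{0} × ℝ^{N-4}`. -/
def zSlice (N : ℕ) : Set (RN N) := { x | ∀ i : Fin N, (i : ℕ) < 4 → x i = 0 }

/-- A least energy pinwheel solution of the symmetric system in `Ω`. -/
def IsLeastEnergyPinwheelSol (N : ℕ) (p : ℝ) (ℓ : ℕ) [NeZero ℓ] (Ω : Set (RN N)) (β : ℝ)
    (u : Fin ℓ → D1p N p) : Prop :=
  InNehariPinwheel N p Ω β u ∧ IsSystemSol N p Ω (symbeta ℓ β) u ∧
  Jfun N p (symbeta ℓ β) u = cOmega N p ℓ Ω β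

/-! ### Matrix realization of the symmetry group -/

/-- Action of a matrix on `ℝ^N`. -/
def matVec (N : ℕ) (A : Matrix (Fin N) (Fin N) ℝ) (x : RN N) : RN N :=
  WithLp.toLp 2 (A.mulVec (fun i => x i))

/-- The generators of `Γ_ℓ` inside `O(N)`: the elements of `G` and `ρ_ℓ`. -/
def GammaGens (N ℓ : ℕ) : Set (Matrix.orthogonalGroup (Fin N) ℝ) :=
  { γ | (∃ g : ℂ, ‖g‖ = 1 ∧ ∀ x, matVec N γ.1 x = cAct N g x) ∨
        (∀ x, matVec N γ.1 x = rhoMap N ℓ x) }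

/-- `Γ_ℓ`: the subgroup of `O(N)` generated by `G ∪ {ρ_ℓ}`. -/
def GammaL (N ℓ : ℕ) : Subgroup (Matrix.orthogonalGroup (Fin N) ℝ) :=
  Subgroup.closure (GammaGens N ℓ)

/-- The `Γ_ℓ`-orbit of a point. -/
def orbitSet (N ℓ : ℕ) (x : RN N) : Set (RN N) :=
  { y | ∃ γ ∈ GammaL N ℓ, y = matVec N (γ : Matrix (Fin N) (Fin N) ℝ) x }

/-- The pairing `A(u,v) = Σ_i ∫ |∇u_i|^{p-2} ⟨∇u_i, ∇v_i⟩` (the gradient part of `J'(u)v`). -/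
def Apair (N : ℕ) (p : ℝ) {ℓ : ℕ} (u v : Fin ℓ → D1p N p) : ℝ :=
  ∑ i, ∫ x, ‖(u i).grad x‖ ^ (p - 2) * (inner ℝ ((u i).grad x) ((v i).grad x) : ℝ)

/-- The pairing `B(u,v) = Σ_i ∫ (Σ_j β_ij |u_j|^{p*/2} |u_i|^{p*/2-2} u_i) v_i`
(the nonlinear part of `J'(u)v` for the symmetric system). -/
def Bpair (N : ℕ) (p : ℝ) {ℓ : ℕ} (β : ℝ) (u v : Fin ℓ → D1p N p) : ℝ :=
  ∑ i, ∫ x, (∑ j, symbeta ℓ β i j * |(u j).toFun x| ^ (pStar N p / 2) *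
      |(u i).toFun x| ^ (pStar N p / 2 - 2) * (u i).toFun x) * (v i).toFun x

end


section Aux

open MeasureTheory

variable {N : ℕ} {p : ℝ}

lemma pStar_pos (hN : 2 ≤ N) (hp0 : 0 < p) (hpN : p < N) : 0 < pStar N p := by
  have hN0 : (0:ℝ) < N := by positivity
  have : (0:ℝ) < (N:ℝ) - p := by linarith
  unfold pStar
  positivity

lemma ratio_nonneg (v : D1p N p) :
    0 ≤ (∫ x, ‖v.grad x‖ ^ p) / (∫ x, |v.toFun x| ^ pStar N p) ^ (p / pStar N p) :=
  div_nonneg (integral_nonneg fun x => Real.rpow_nonneg (norm_nonneg _) _)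
    (Real.rpow_nonneg (integral_nonneg fun x => Real.rpow_nonneg (abs_nonneg _) _) _)

lemma sobolevS_nonneg (N : ℕ) (p : ℝ) : 0 ≤ SobolevS N p := by
  apply Real.sInf_nonneg
  rintro r ⟨v, hv, rfl⟩
  exact ratio_nonneg v

lemma sobolevS_le (v : D1p N p) (hv : ¬ (v.toFun =ᵐ[volume] (0 : RN N → ℝ))) :
    SobolevS N p ≤
      (∫ x, ‖v.grad x‖ ^ p) / (∫ x, |v.toFun x| ^ pStar N p) ^ (p / pStar N p) := by
  apply csInf_le
  · refine ⟨0, ?_⟩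
    rintro r ⟨w, hw, rfl⟩
    exact ratio_nonneg w
  · exact ⟨v, hv, rfl⟩

lemma denom_pos (hq : 0 < pStar N p) (v : D1p N p)
    (hv : ¬ (v.toFun =ᵐ[volume] (0 : RN N → ℝ))) :
    0 < ∫ x, |v.toFun x| ^ pStar N p := by
  have hne : ENNReal.ofReal (pStar N p) ≠ 0 := by
    simp [ENNReal.ofReal_eq_zero, not_le, hq]
  have hint : Integrable (fun x => |v.toFun x| ^ pStar N p) volume := by
    have h := v.memLp_star.integrable_norm_rpow hne ENNReal.ofReal_ne_top
    simpa [ENNReal.toReal_ofReal hq.le, Real.norm_eq_abs] using h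
  rw [integral_pos_iff_support_of_nonneg
    (fun x => Real.rpow_nonneg (abs_nonneg _) _) hint]
  rw [pos_iff_ne_zero]
  intro h0
  apply hv
  have h1 : ∀ᵐ x, |v.toFun x| ^ pStar N p = 0 := by
    rw [ae_iff]
    exact h0
  filter_upwards [h1] with x hx
  have h2 := (Real.rpow_eq_zero (abs_nonneg _) (ne_of_gt hq)).mp hx
  simpa using h2

lemma pairInt_nonneg (u v : D1p N p) : 0 ≤ pairInt N p u v :=
  integral_nonneg fun x =>
    mul_nonneg (Real.rpow_nonneg (abs_nonneg _) _) (Real.rpow_nonneg (abs_nonneg _) _)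

lemma pairInt_self (hq : 0 < pStar N p) (v : D1p N p) :
    pairInt N p v v = ∫ x, |v.toFun x| ^ pStar N p := by
  unfold pairInt
  congr 1
  funext x
  have hsum : pStar N p / 2 + pStar N p / 2 = pStar N p := by ring
  rw [← Real.rpow_add' (abs_nonneg _) (by rw [hsum]; exact ne_of_gt hq), hsum]

lemma comp_bound (hN : 2 ≤ N) (hp0 : 0 < p) (hpN : p < N) (b : ℝ) (hb : 0 < b)
    (v : D1p N p) (hv : ¬ (v.toFun =ᵐ[volume] (0 : RN N → ℝ)))
    (hle : gradPow N p v ≤ b * ∫ x, |v.toFun x| ^ pStar N p) :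
    (N : ℝ) * mI N p b ≤ gradPow N p v := by
  have hNR : (2:ℝ) ≤ (N:ℝ) := by exact_mod_cast hN
  have hN0 : (0:ℝ) < N := by linarith
  have hNp : (0:ℝ) < (N:ℝ) - p := by linarith
  have hq : 0 < pStar N p := pStar_pos hN hp0 hpN
  set S := SobolevS N p with hSdef
  set D := ∫ x, |v.toFun x| ^ pStar N p with hDdef
  have hD : 0 < D := denom_pos hq v hv
  have hS0 : 0 ≤ S := sobolevS_nonneg N p
  set a : ℝ := ((N:ℝ) - p) / (N:ℝ) with hadef
  set c : ℝ := ((N:ℝ) - p) / p with hcdef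
  have hc0 : 0 ≤ c := by positivity
  have ha : p / pStar N p = a := by
    rw [hadef]
    unfold pStar
    field_simp
  have hDa : 0 < D ^ a := Real.rpow_pos_of_pos hD _
  have h1 : S * D ^ a ≤ gradPow N p v := by
    have h := sobolevS_le v hv
    rw [ha] at h
    exact (le_div_iff₀ hDa).mp h
  have hsplit : D = D ^ a * D ^ (p / (N:ℝ)) := by
    have h1' : a + p / (N:ℝ) = 1 := by
      rw [hadef]; field_simp; ring
    calc D = D ^ (1:ℝ) := (Real.rpow_one D).symm
      _ = D ^ (a + p / (N:ℝ)) := by rw [h1']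
      _ = D ^ a * D ^ (p / (N:ℝ)) := Real.rpow_add hD _ _
  have h2 : S ≤ b * D ^ (p / (N:ℝ)) := by
    have h1'' : S * D ^ a ≤ (b * D ^ (p / (N:ℝ))) * D ^ a := by
      have he : b * D = (b * D ^ (p / (N:ℝ))) * D ^ a := by
        conv_lhs => rw [hsplit]
        ring
      calc S * D ^ a ≤ gradPow N p v := h1
        _ ≤ b * D := hle
        _ = (b * D ^ (p / (N:ℝ))) * D ^ a := he
    exact le_of_mul_le_mul_right h1'' hDa
  have h3 : (S / b) ^ c ≤ D ^ a := by
    have h2' : S / b ≤ D ^ (p / (N:ℝ)) := by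
      rw [div_le_iff₀ hb]
      linarith
    calc (S / b) ^ c ≤ (D ^ (p / (N:ℝ))) ^ c :=
          Real.rpow_le_rpow (div_nonneg hS0 hb.le) h2' hc0
      _ = D ^ (p / (N:ℝ) * c) := (Real.rpow_mul hD.le _ _).symm
      _ = D ^ a := by
          congr 1
          rw [hcdef, hadef]
          field_simp
  have h4 : S * (S / b) ^ c ≤ gradPow N p v :=
    le_trans (mul_le_mul_of_nonneg_left h3 hS0) h1
  have hSpow : S * S ^ c = S ^ ((N:ℝ) / p) := by
    have h1c : (1:ℝ) + c = (N:ℝ) / p := by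
      rw [hcdef]; field_simp; ring
    rw [← h1c, Real.rpow_add' hS0 (by rw [h1c]; positivity), Real.rpow_one]
  have h5 : (N:ℝ) * mI N p b = S * (S / b) ^ c := by
    unfold mI
    rw [Real.div_rpow hS0 hb.le, Real.rpow_neg hb.le, ← hSdef, ← hcdef]
    have hr : S * (S ^ c / b ^ c) = S * S ^ c / b ^ c := by ring
    rw [hr, hSpow]
    have hbc : b ^ c ≠ 0 := (Real.rpow_pos_of_pos hb c).ne'
    have hNne : ((N:ℝ)) ≠ 0 := hN0.ne'
    field_simp
  linarith

lemma nehari_bounds (N : ℕ) {ℓ : ℕ} (hN : 2 ≤ N) (hp0 : 0 < p) (hpN : p < N)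
    (β : Fin ℓ → Fin ℓ → ℝ) (hβd : ∀ i, 0 < β i i) (hβo : ∀ i j, i ≠ j → β i j < 0)
    (u : Fin ℓ → D1p N p)
    (hu : ∀ i, ¬ ((u i).toFun =ᵐ[volume] (0 : RN N → ℝ)) ∧
      gradPow N p (u i) = ∑ j, β i j * pairInt N p (u j) (u i)) :
    Jfun N p β u = (1 / (N : ℝ)) * ∑ i, gradPow N p (u i) ∧
      (∑ i, mI N p (β i i)) ≤ Jfun N p β u := by
  have hNR : (2:ℝ) ≤ (N:ℝ) := by exact_mod_cast hN
  have hN0 : (0:ℝ) < N := by linarith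
  have hNp : (0:ℝ) < (N:ℝ) - p := by linarith
  have hq : 0 < pStar N p := pStar_pos hN hp0 hpN
  have hJ : Jfun N p β u = (1 / (N : ℝ)) * ∑ i, gradPow N p (u i) := by
    unfold Jfun
    have hrw : ∀ i : Fin ℓ, ∑ j, β i j * pairInt N p (u j) (u i) = gradPow N p (u i) :=
      fun i => ((hu i).2).symm
    rw [Finset.sum_congr rfl (fun i _ => hrw i)]
    have hco : 1 / p - 1 / pStar N p = 1 / (N:ℝ) := by
      unfold pStar
      field_simp
      ring
    rw [← sub_mul, hco]
  refine ⟨hJ, ?_⟩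
  have hkey : ∀ i, (N:ℝ) * mI N p (β i i) ≤ gradPow N p (u i) := by
    intro i
    apply comp_bound hN hp0 hpN (β i i) (hβd i) (u i) (hu i).1
    rw [← pairInt_self hq (u i)]
    rw [(hu i).2]
    rw [← Finset.add_sum_erase Finset.univ _ (Finset.mem_univ i)]
    have hrest : ∑ j ∈ Finset.univ.erase i, β i j * pairInt N p (u j) (u i) ≤ 0 := by
      apply Finset.sum_nonpos
      intro j hj
      have hji : i ≠ j := fun h => (Finset.mem_erase.mp hj).1 h.symm
      exact mul_nonpos_of_nonpos_of_nonneg (hβo i j hji).le (pairInt_nonneg _ _)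
    linarith
  rw [hJ, Finset.mul_sum]
  apply Finset.sum_le_sum
  intro i _
  have h := hkey i
  have heq : mI N p (β i i) = (1/(N:ℝ)) * ((N:ℝ) * mI N p (β i i)) := by
    field_simp
  rw [heq]
  exact mul_le_mul_of_nonneg_left h (by positivity)

end Aux

section Theorems

theorem stmt17 (N ℓ : ℕ) (hN : 2 ≤ N) (hl : 2 ≤ ℓ) (p : ℝ)
    (hp1 : 2 * N / (N + 2) < p) (hpN : p < N)
    (β : Fin ℓ → Fin ℓ → ℝ) (hβd : ∀ i, 0 < β i i) (hβo : ∀ i j, i ≠ j → β i j < 0)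
    (Ω : Set (RN N)) (hΩ : IsDomainSet N Ω)
    (u : Fin ℓ → D1p N p) (hu : InNehariM N p Ω β u) :
    Jfun N p β u = (1 / (N : ℝ)) * ∑ i, gradPow N p (u i) ∧
    (∑ i, mI N p (β i i)) ≤ Jfun N p β u ∧
    (∑ i, mI N p (β i i)) ≤ muOmega N p Ω β := by
  have hN0 : (0:ℝ) < N := by positivity
  have hp0 : 0 < p := by
    have h1 : (1:ℝ) ≤ 2 * N / (N + 2) := by
      rw [le_div_iff₀ (by positivity)]
      have : (2:ℝ) ≤ (N:ℝ) := by exact_mod_cast hN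
      linarith
    linarith
  have hmain := nehari_bounds N hN hp0 hpN β hβd hβo u hu.2
  refine ⟨hmain.1, hmain.2, ?_⟩
  unfold muOmega
  refine le_csInf ⟨Jfun N p β u, ⟨u, hu, rfl⟩⟩ ?_
  rintro r ⟨v, hv, rfl⟩
  exact (nehari_bounds N hN hp0 hpN β hβd hβo v hv.2).2

end Theorems
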